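/- Let G be a group satisfying the minimal condition on centralizers (an M_C-group) and let H ≤ G be an α-hypercentral subgroup for some ordinal α. Then E_{α+1}(H) is solvable. -/

import Mathlib

/-!
Write `C γ` for the iterated centralizers of `H` inside `E_α(H)`. Each `C γ` is a subgroup,
normalized by every other level, and the `C γ` form an ascending chain, continuous at limits,
starting from `1`. Hypercentrality puts `H` inside `C α`, and then the definition of the
envelopes gives `K := E_{α+1}(H) ≤ C (α+1)` and `[K, C (δ+1)] ≤ C δ` for `δ ≤ α`. Passing from
`E_δ` to the smaller `E_α` intersects the lower levels of the tower with `E_α`, which is how the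
defining property of `E_{δ+1}` reaches the tower inside `E_α`.

By the three subgroups lemma, if the derived subgroup `K⁽ⁿ⁾` centralizes `C δ` then `K⁽ⁿ⁺¹⁾`
centralizes `C (δ+1)`; at a limit ordinal the minimal condition on centralizers makes the
centralizer of the union equal to that of one earlier level. Hence some `K⁽ⁿ⁾` centralizes
`C (α+1) ⊇ K`, and `K⁽ⁿ⁺¹⁾ = 1`.
-/

open Ordinal

section Defs
variable {G : Type*} [Group G]

attribute [local instance] Classical.propDecidable

/-- The commutator `[x,y] = x⁻¹y⁻¹xy` as in the paper. -/
def pcomm (x y : G) : G := x⁻¹ * y⁻¹ * x * y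

/-- Transfinite upper central series of the (sub)set `E` of `G`, viewed inside `G`. -/
noncomputable def ZSet (E : Set G) (α : Ordinal) : Set G :=
  if α = 0 then {1}
  else if hs : ∃ β < α, α = β + 1 then
    {x | x ∈ E ∧ ∀ g ∈ E, pcomm x g ∈ ZSet E hs.choose}
  else ⋃ (β : Ordinal) (_ : β < α), ZSet E β
termination_by α
decreasing_by all_goals first | assumption | exact hs.choose_spec.1

/-- Transfinite iterated centralizers `C_E^α(H)` of `H` inside the ambient set `E ⊆ G`. -/
noncomputable def CIter (E H : Set G) (α : Ordinal) : Set G :=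
  if α = 0 then {1}
  else if hs : ∃ β < α, α = β + 1 then
    {x | x ∈ E ∧ (∀ β < α, ∀ a : G, a ∈ CIter E H β ↔ x * a * x⁻¹ ∈ CIter E H β)
       ∧ ∀ h ∈ H, pcomm x h ∈ CIter E H hs.choose}
  else ⋃ (β : Ordinal) (_ : β < α), CIter E H β
termination_by α
decreasing_by all_goals first | assumption | exact hs.choose_spec.1

/-- Transfinite envelopes `E_α(H)` of `H ⊆ G`. -/
noncomputable def Env (H : Set G) (α : Ordinal) : Set G :=
  if α = 0 then Set.univ
  else if hs : ∃ β < α, α = β + 1 then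
    {g | g ∈ Env H hs.choose ∧
      ∀ c ∈ CIter (Env H hs.choose) H (hs.choose + 1),
        pcomm g c ∈ CIter (Env H hs.choose) H hs.choose}
  else ⋂ (β : Ordinal) (_ : β < α), Env H β
termination_by α
decreasing_by all_goals first | assumption | exact hs.choose_spec.1

end Defs

universe u

open Order Subgroup
open scoped commutatorElement

@[elab_as_elim]
theorem Ordinal.induction_zero_add_one_limit {motive : Ordinal → Prop} (zero : motive 0)
    (add_one : ∀ β, (∀ γ ≤ β, motive γ) → motive (β + 1))
    (limit : ∀ o, IsSuccLimit o → (∀ γ < o, motive γ) → motive o) (o : Ordinal) : motive o := by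
  induction o using WellFoundedLT.induction with
  | _ o IH =>
  rcases Ordinal.zero_or_succ_or_isSuccLimit o with rfl | ⟨β, rfl⟩ | ho
  · exact zero
  · rw [succ_eq_add_one]
    exact add_one β fun γ hγ => IH γ (lt_add_one_iff.mpr hγ)
  · exact limit o ho IH

namespace Ordinal

lemma choose_eq_of_add_one {β : Ordinal} (hs : ∃ γ < β + 1, β + 1 = γ + 1) : hs.choose = β :=
  (add_one_inj.mp hs.choose_spec.2).symm

lemma not_exists_add_one_eq_of_isSuccLimit {o : Ordinal} (ho : IsSuccLimit o) :
    ¬ ∃ γ < o, o = γ + 1 := by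
  rintro ⟨γ, -, rfl⟩
  exact not_isSuccLimit_add_one γ ho

end Ordinal

section Unfold

variable {G : Type*} [Group G] {β o : Ordinal} {x : G}

lemma ZSet_zero (E : Set G) : ZSet E 0 = {1} := by
  rw [ZSet, if_pos rfl]

lemma mem_ZSet_add_one {E : Set G} :
    x ∈ ZSet E (β + 1) ↔ x ∈ E ∧ ∀ g ∈ E, pcomm x g ∈ ZSet E β := by
  rw [ZSet, if_neg (by simp), dif_pos ⟨β, lt_add_one β, rfl⟩, Ordinal.choose_eq_of_add_one]
  rfl

lemma mem_ZSet_of_isSuccLimit {E : Set G} (ho : IsSuccLimit o) :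
    x ∈ ZSet E o ↔ ∃ β < o, x ∈ ZSet E β := by
  rw [ZSet, if_neg ho.pos.ne', dif_neg (Ordinal.not_exists_add_one_eq_of_isSuccLimit ho)]
  simp

lemma CIter_zero (E H : Set G) : CIter E H 0 = {1} := by
  rw [CIter, if_pos rfl]

lemma mem_CIter_add_one {E H : Set G} :
    x ∈ CIter E H (β + 1) ↔ x ∈ E ∧ (∀ γ ≤ β, x ∈ normalizer (CIter E H γ)) ∧
      ∀ h ∈ H, pcomm x h ∈ CIter E H β := by
  rw [CIter, if_neg (by simp), dif_pos ⟨β, lt_add_one β, rfl⟩, Ordinal.choose_eq_of_add_one]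
  simp only [lt_add_one_iff]
  rfl

lemma mem_CIter_of_isSuccLimit {E H : Set G} (ho : IsSuccLimit o) :
    x ∈ CIter E H o ↔ ∃ β < o, x ∈ CIter E H β := by
  rw [CIter, if_neg ho.pos.ne', dif_neg (Ordinal.not_exists_add_one_eq_of_isSuccLimit ho)]
  simp

lemma Env_zero (H : Set G) : Env H 0 = Set.univ := by
  rw [Env, if_pos rfl]

lemma mem_Env_add_one {H : Set G} :
    x ∈ Env H (β + 1) ↔ x ∈ Env H β ∧
      ∀ c ∈ CIter (Env H β) H (β + 1), pcomm x c ∈ CIter (Env H β) H β := by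
  rw [Env, if_neg (by simp), dif_pos ⟨β, lt_add_one β, rfl⟩, Ordinal.choose_eq_of_add_one]
  rfl

lemma Env_of_isSuccLimit (H : Set G) (ho : IsSuccLimit o) : Env H o = ⋂ β < o, Env H β := by
  rw [Env, if_neg ho.pos.ne', dif_neg (Ordinal.not_exists_add_one_eq_of_isSuccLimit ho)]

end Unfold

section Commutators

variable {G : Type*} [Group G]

lemma pcomm_one_left (c : G) : pcomm 1 c = 1 := by
  simp [pcomm]

lemma pcomm_inv (x c : G) : (pcomm x c)⁻¹ = pcomm c x := by
  simp only [pcomm]; group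

lemma pcomm_mul_left (x y c : G) : pcomm (x * y) c = y⁻¹ * pcomm x c * y * pcomm y c := by
  simp only [pcomm]; group

lemma pcomm_inv_left (x c : G) : pcomm x⁻¹ c = x * (pcomm x c)⁻¹ * x⁻¹ := by
  simp only [pcomm]; group

lemma pcomm_conj_left (g a c : G) : pcomm (g * a * g⁻¹) c = g * pcomm a (g⁻¹ * c * g) * g⁻¹ := by
  simp only [pcomm]; group

lemma conj_eq_mul_pcomm (g a : G) : g⁻¹ * a * g = a * (pcomm g a)⁻¹ := by
  simp only [pcomm]; group

lemma commutatorElement_eq_pcomm (g c : G) : ⁅g, c⁆ = pcomm g⁻¹ c⁻¹ := by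
  simp only [pcomm, commutatorElement_def, inv_inv]

lemma pcomm_mem {S : Subgroup G} {x c : G} (hx : x ∈ S) (hc : c ∈ S) : pcomm x c ∈ S := by
  unfold pcomm
  exact mul_mem (mul_mem (mul_mem (inv_mem hx) (inv_mem hc)) hx) hc

lemma Subgroup.le_normalizer_of_conj_mem {K : Subgroup G} {S : Set G}
    (h : ∀ k ∈ K, ∀ a ∈ S, k * a * k⁻¹ ∈ S) : K ≤ normalizer S := by
  intro k hk a
  refine ⟨h k hk a, fun ha => ?_⟩
  simpa [mul_assoc] using h k⁻¹ (inv_mem hk) _ ha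

def relCentralizer (M S : Subgroup G) (hM : M ≤ normalizer (S : Set G)) (X : Set G) :
    Subgroup G where
  carrier := {x | x ∈ M ∧ ∀ c ∈ X, pcomm x c ∈ S}
  one_mem' := ⟨M.one_mem, fun c _ => by simp [pcomm_one_left]⟩
  mul_mem' := by
    rintro x y ⟨hxM, hx⟩ ⟨hyM, hy⟩
    refine ⟨mul_mem hxM hyM, fun c hc => ?_⟩
    rw [pcomm_mul_left]
    exact mul_mem ((mem_normalizer_iff''.mp (hM hyM) _).mp (hx c hc)) (hy c hc)
  inv_mem' := by
    rintro x ⟨hxM, hx⟩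
    refine ⟨inv_mem hxM, fun c hc => ?_⟩
    rw [pcomm_inv_left]
    exact (mem_normalizer_iff.mp (hM hxM) _).mp (inv_mem (hx c hc))

lemma mem_relCentralizer {M S : Subgroup G} {hM : M ≤ normalizer (S : Set G)} {X : Set G}
    {x : G} : x ∈ relCentralizer M S hM X ↔ x ∈ M ∧ ∀ c ∈ X, pcomm x c ∈ S :=
  Iff.rfl

end Commutators

section Tower

variable {G : Type*} [Group G]

lemma exists_le_pcomm_mem_CIter (E H : Set G) (γ : Ordinal) :
    ∀ x ∈ CIter E H γ, ∀ h ∈ H, ∃ δ ≤ γ, pcomm x h ∈ CIter E H δ := by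
  induction γ using Ordinal.induction_zero_add_one_limit with
  | zero =>
    intro x hx h _
    refine ⟨0, le_rfl, ?_⟩
    obtain rfl : x = 1 := (CIter_zero E H).subset hx
    rw [pcomm_one_left, CIter_zero]
    rfl
  | add_one β _ => exact fun x hx h hh => ⟨β, (lt_add_one β).le, (mem_CIter_add_one.mp hx).2.2 h hh⟩
  | limit o ho IH =>
    intro x hx h hh
    obtain ⟨β, hβ, hxβ⟩ := (mem_CIter_of_isSuccLimit ho).mp hx
    obtain ⟨δ, hδ, hmem⟩ := IH β hβ x hxβ h hh
    exact ⟨δ, hδ.trans hβ.le, hmem⟩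

variable (E : Subgroup G) (H : Set G)

lemma CIter_subset (γ : Ordinal) : CIter E H γ ⊆ E := by
  induction γ using Ordinal.induction_zero_add_one_limit with
  | zero => simp [CIter_zero]
  | add_one β _ => exact fun x hx => (mem_CIter_add_one.mp hx).1
  | limit o ho IH =>
    intro x hx
    obtain ⟨β, hβ, hxβ⟩ := (mem_CIter_of_isSuccLimit ho).mp hx
    exact IH β hβ hxβ

/-- Levels below `ε` lie in the subgroup `CIter E H ε`; levels above it normalize it by
definition. -/
lemma CIter_subset_normalizer_of_mono {ε : Ordinal.{u}} (hS : ∃ S : Subgroup G, ↑S = CIter E H ε)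
    (hmono : ∀ δ ≤ ε, CIter E H δ ⊆ CIter E H ε) (γ : Ordinal.{u}) :
    CIter E H γ ⊆ normalizer (CIter E H ε) := by
  obtain ⟨S, hS⟩ := hS
  have hle : ∀ δ ≤ ε, CIter E H δ ⊆ normalizer (CIter E H ε) := fun δ hδ x hx => by
    have hxS : x ∈ (S : Set G) := hS ▸ hmono δ hδ hx
    rw [← hS]
    exact le_normalizer hxS
  by_cases hγ : γ ≤ ε
  · exact hle γ hγ
  induction γ using Ordinal.induction_zero_add_one_limit with
  | zero => exact hle 0 zero_le
  | add_one β _ =>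
    exact fun x hx => (mem_CIter_add_one.mp hx).2.1 ε (lt_add_one_iff.mp (not_le.mp hγ))
  | limit o ho IH =>
    intro x hx
    obtain ⟨β, hβ, hxβ⟩ := (mem_CIter_of_isSuccLimit ho).mp hx
    by_cases hβε : β ≤ ε
    · exact hle β hβε hxβ
    · exact IH β hβ hβε hxβ

theorem CIter_isSubgroup_and_mono (ε : Ordinal.{u}) :
    (∃ S : Subgroup G, ↑S = CIter E H ε) ∧ ∀ δ ≤ ε, CIter E H δ ⊆ CIter E H ε := by
  induction ε using Ordinal.induction_zero_add_one_limit with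
  | zero =>
    refine ⟨⟨⊥, by rw [CIter_zero, coe_bot]⟩, fun δ hδ => ?_⟩
    rw [nonpos_iff_eq_zero.mp hδ]
  | add_one β IH =>
    obtain ⟨S, hS⟩ := (IH β le_rfl).1
    have hN : ∀ γ ≤ β, ∀ ν, CIter E H ν ⊆ normalizer (CIter E H γ) := fun γ hγ =>
      CIter_subset_normalizer_of_mono E H (IH γ hγ).1 (IH γ hγ).2
    have hstep : CIter E H β ⊆ CIter E H (β + 1) := fun x hx => by
      refine mem_CIter_add_one.mpr ⟨CIter_subset E H β hx, fun γ hγ => hN γ hγ β hx,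
        fun h hh => ?_⟩
      obtain ⟨δ, hδ, hmem⟩ := exists_le_pcomm_mem_CIter _ H β x hx h hh
      exact (IH β le_rfl).2 δ hδ hmem
    refine ⟨⟨relCentralizer (E ⊓ ⨅ γ ≤ β, normalizer (CIter E H γ)) S ?_ H, ?_⟩, fun δ hδ => ?_⟩
    · intro x hx
      rw [hS]
      exact mem_iInf.mp (mem_iInf.mp (mem_inf.mp hx).2 β) le_rfl
    · ext x
      simp only [SetLike.mem_coe, mem_relCentralizer, mem_inf, mem_iInf, mem_CIter_add_one, ← hS,
        and_assoc]
    · rcases hδ.lt_or_eq with hδ | rfl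
      · exact ((IH β le_rfl).2 δ (lt_add_one_iff.mp hδ)).trans hstep
      · exact subset_rfl
  | limit o ho IH =>
    choose S hS using fun β : Set.Iio o => (IH β β.2).1
    have hmono : Monotone S := fun β γ h => by
      rw [← SetLike.coe_subset_coe, hS, hS]
      exact (IH γ γ.2).2 β h
    have : Nonempty (Set.Iio o) := ⟨⟨0, ho.bot_lt⟩⟩
    refine ⟨⟨⨆ β, S β, ?_⟩, fun δ hδ => ?_⟩
    · ext x
      simp [coe_iSup_of_directed hmono.directed_le, hS, mem_CIter_of_isSuccLimit ho]
    · rcases hδ.lt_or_eq with hδ | rfl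
      · exact fun x hx => (mem_CIter_of_isSuccLimit ho).mpr ⟨δ, hδ, hx⟩
      · exact subset_rfl

/-- `CIter E H γ` is already a subgroup (`coe_iterCentralizer`); the closure only bundles it. -/
def iterCentralizer (γ : Ordinal) : Subgroup G := closure (CIter E H γ)

lemma coe_iterCentralizer (γ : Ordinal) : (iterCentralizer E H γ : Set G) = CIter E H γ := by
  obtain ⟨S, hS⟩ := (CIter_isSubgroup_and_mono E H γ).1
  rw [iterCentralizer, ← hS, closure_eq]

lemma iterCentralizer_zero : iterCentralizer E H 0 = ⊥ :=
  SetLike.coe_injective (by rw [coe_iterCentralizer, CIter_zero, coe_bot])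

lemma coe_iterCentralizer_of_isSuccLimit {o : Ordinal} (ho : IsSuccLimit o) :
    (iterCentralizer E H o : Set G) = ⋃ β < o, (iterCentralizer E H β : Set G) := by
  ext x
  simp [coe_iterCentralizer, mem_CIter_of_isSuccLimit ho]

lemma CIter_mono : Monotone (CIter E H) := fun δ ε h => (CIter_isSubgroup_and_mono E H ε).2 δ h

lemma iterCentralizer_mono : Monotone (iterCentralizer E H) := fun δ ε h => by
  rw [← SetLike.coe_subset_coe, coe_iterCentralizer, coe_iterCentralizer]
  exact CIter_mono E H h

end Tower

@[simp]
lemma mem_iterCentralizer {G : Type*} [Group G] {E : Subgroup G} {H : Set G} {γ : Ordinal} {x : G} :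
    x ∈ iterCentralizer E H γ ↔ x ∈ CIter E H γ := by
  rw [← SetLike.mem_coe, coe_iterCentralizer]

section HyperCentre

variable {G : Type*} [Group G] {E H : Subgroup G}

lemma le_normalizer_CIter (hHE : H ≤ E) (γ : Ordinal) : H ≤ normalizer (CIter E H γ) := by
  induction γ using Ordinal.induction_zero_add_one_limit with
  | zero =>
    refine le_normalizer_of_conj_mem fun k _ a ha => ?_
    rw [CIter_zero] at ha ⊢
    simp [Set.mem_singleton_iff.mp ha]
  | add_one β IH =>
    refine le_normalizer_of_conj_mem fun k hk a ha => ?_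
    obtain ⟨haE, haN, haH⟩ := mem_CIter_add_one.mp ha
    refine mem_CIter_add_one.mpr ⟨?_, fun γ hγ => ?_, fun h hh => ?_⟩
    · exact mul_mem (mul_mem (hHE hk) haE) (inv_mem (hHE hk))
    · exact mul_mem (mul_mem (IH γ hγ hk) (haN γ hγ)) (inv_mem (IH γ hγ hk))
    · rw [pcomm_conj_left]
      have hconj : k⁻¹ * h * k ∈ H := by simpa using mul_mem (mul_mem (inv_mem hk) hh) hk
      exact (mem_set_normalizer_iff.mp (IH β le_rfl hk) _).mp (haH _ hconj)
  | limit o ho IH =>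
    refine le_normalizer_of_conj_mem fun k hk a ha => ?_
    obtain ⟨β, hβ, haβ⟩ := (mem_CIter_of_isSuccLimit ho).mp ha
    exact (mem_CIter_of_isSuccLimit ho).mpr
      ⟨β, hβ, (mem_set_normalizer_iff.mp (IH β hβ hk) a).mp haβ⟩

lemma ZSet_subset_CIter (hHE : H ≤ E) (γ : Ordinal) : ZSet (H : Set G) γ ⊆ CIter E H γ := by
  induction γ using Ordinal.induction_zero_add_one_limit with
  | zero => rw [ZSet_zero, CIter_zero]
  | add_one β IH =>
    intro x hx
    obtain ⟨hxH, hxZ⟩ := mem_ZSet_add_one.mp hx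
    exact mem_CIter_add_one.mpr ⟨hHE hxH, fun γ _ => le_normalizer_CIter hHE γ hxH,
      fun h hh => IH β le_rfl (hxZ h hh)⟩
  | limit o ho IH =>
    intro x hx
    obtain ⟨β, hβ, hxβ⟩ := (mem_ZSet_of_isSuccLimit ho).mp hx
    exact (mem_CIter_of_isSuccLimit ho).mpr ⟨β, hβ, IH β hβ hxβ⟩

end HyperCentre

section Envelope

variable {G : Type*} [Group G]

lemma Env_antitone (H : Set G) : Antitone (Env H) := by
  suffices ∀ β, ∀ γ ≤ β, Env H β ⊆ Env H γ from fun γ β h => this β γ h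
  intro β
  induction β using Ordinal.induction_zero_add_one_limit with
  | zero => intro γ hγ; rw [nonpos_iff_eq_zero.mp hγ]
  | add_one β IH =>
    intro γ hγ
    rcases hγ.lt_or_eq with hγ | rfl
    · exact fun x hx => IH β le_rfl γ (lt_add_one_iff.mp hγ) (mem_Env_add_one.mp hx).1
    · exact subset_rfl
  | limit o ho IH =>
    intro γ hγ
    rcases hγ.lt_or_eq with hγ | rfl
    · rw [Env_of_isSuccLimit H ho]
      exact Set.biInter_subset_of_mem hγ
    · exact subset_rfl

lemma CIter_eq_inter {E' E : Subgroup G} (hE : E' ≤ E) {H : Set G} (hH : H ⊆ E')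
    {γ₀ : Ordinal.{u}} (hN : ∀ ν < γ₀, E' ≤ normalizer (CIter E H ν)) :
    ∀ γ ≤ γ₀, CIter E' H γ = CIter E H γ ∩ E' := by
  intro γ
  induction γ using Ordinal.induction_zero_add_one_limit with
  | zero =>
    intro _
    ext x
    simp only [CIter_zero, Set.mem_inter_iff, Set.mem_singleton_iff, SetLike.mem_coe]
    exact ⟨fun hx => ⟨hx, hx ▸ E'.one_mem⟩, And.left⟩
  | add_one μ IH =>
    intro hμ
    have IH' : ∀ ν ≤ μ, CIter E' H ν = CIter E H ν ∩ E' := fun ν hν =>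
      IH ν hν (hν.trans (lt_add_one μ).le |>.trans hμ)
    ext x
    simp only [Set.mem_inter_iff, mem_CIter_add_one, SetLike.mem_coe]
    constructor
    · rintro ⟨hxE', -, hxH⟩
      refine ⟨⟨hE hxE', fun ν hν => hN ν (hν.trans_lt (add_one_le_iff.mp hμ)) hxE',
        fun h hh => ?_⟩, hxE'⟩
      exact (IH' μ le_rfl ▸ hxH h hh).1
    · rintro ⟨⟨-, hxN, hxH⟩, hxE'⟩
      refine ⟨hxE', fun ν hν a => ?_, fun h hh => ?_⟩
      · rw [IH' ν hν, Set.mem_inter_iff, Set.mem_inter_iff]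
        exact and_congr (hxN ν hν a) (mem_set_normalizer_iff.mp (le_normalizer hxE') a)
      · rw [IH' μ le_rfl]
        exact ⟨hxH h hh, pcomm_mem hxE' (hH hh)⟩
  | limit o ho IH =>
    intro ho₀
    ext x
    simp only [Set.mem_inter_iff, mem_CIter_of_isSuccLimit ho]
    constructor
    · rintro ⟨β, hβ, hx⟩
      rw [IH β hβ (hβ.le.trans ho₀)] at hx
      exact ⟨⟨β, hβ, hx.1⟩, hx.2⟩
    · rintro ⟨⟨β, hβ, hx⟩, hxE'⟩
      exact ⟨β, hβ, IH β hβ (hβ.le.trans ho₀) ▸ ⟨hx, hxE'⟩⟩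

structure IsEnvelope (H : Subgroup G) (β : Ordinal) (E : Subgroup G) : Prop where
  coe_eq : (E : Set G) = Env H β
  le : H ≤ E
  le_normalizer : ∀ γ ≤ β, E ≤ normalizer (CIter E H γ)

variable {H : Subgroup G}

lemma pcomm_mem_CIter_of_mem_Env {δ β : Ordinal.{u}} (hδβ : δ ≤ β) {Eδ Eβ : Subgroup G}
    (hEδ : IsEnvelope H δ Eδ) (hEβ : (Eβ : Set G) = Env H β) (hHβ : H ≤ Eβ) {g c : G}
    (hg : g ∈ Env H (δ + 1)) (hgβ : g ∈ Eβ) (hc : c ∈ CIter Eβ H (δ + 1)) :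
    pcomm g c ∈ CIter Eβ H δ := by
  have hle : Eβ ≤ Eδ := by
    rw [← SetLike.coe_subset_coe, hEβ, hEδ.coe_eq]
    exact Env_antitone _ hδβ
  have hCP := CIter_eq_inter hle hHβ (γ₀ := δ + 1) fun ν hν =>
    hle.trans (hEδ.le_normalizer ν (lt_add_one_iff.mp hν))
  rw [hCP (δ + 1) le_rfl] at hc
  rw [hCP δ (lt_add_one δ).le]
  refine ⟨?_, pcomm_mem hgβ hc.2⟩
  rw [mem_Env_add_one, ← hEδ.coe_eq] at hg
  exact hg.2 c hc.1

lemma le_normalizer_CIter_of_coe_eq_Env {β : Ordinal.{u}} {E : Subgroup G}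
    (hE : (E : Set G) = Env H β) (hHE : H ≤ E) (hprev : ∀ δ < β, ∃ Eδ, IsEnvelope H δ Eδ) :
    ∀ γ ≤ β, E ≤ normalizer (CIter E H γ) := by
  intro γ
  induction γ using Ordinal.induction_zero_add_one_limit with
  | zero =>
    refine fun _ => le_normalizer_of_conj_mem fun k _ a ha => ?_
    rw [CIter_zero] at ha ⊢
    simp [Set.mem_singleton_iff.mp ha]
  | add_one δ _ =>
    intro hδ
    obtain ⟨Eδ, hEδ⟩ := hprev δ (add_one_le_iff.mp hδ)
    refine le_normalizer_of_conj_mem fun g hg a ha => ?_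
    have hg' : g⁻¹ ∈ Env H (δ + 1) := Env_antitone _ hδ (hE.subset (inv_mem hg))
    have hpc := pcomm_mem_CIter_of_mem_Env (add_one_le_iff.mp hδ).le hEδ hE hHE hg' (inv_mem hg) ha
    rw [← inv_inv g, inv_inv g⁻¹, conj_eq_mul_pcomm]
    rw [← mem_iterCentralizer] at ha hpc ⊢
    exact mul_mem ha (inv_mem (iterCentralizer_mono E H (lt_add_one δ).le hpc))
  | limit o ho IH =>
    refine fun hoβ => le_normalizer_of_conj_mem fun g hg a ha => ?_
    obtain ⟨γ, hγ, haγ⟩ := (mem_CIter_of_isSuccLimit ho).mp ha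
    exact (mem_CIter_of_isSuccLimit ho).mpr
      ⟨γ, hγ, (mem_set_normalizer_iff.mp (IH γ hγ (hγ.le.trans hoβ) hg) a).mp haγ⟩

theorem exists_isEnvelope (H : Subgroup G) (β : Ordinal) : ∃ E, IsEnvelope H β E := by
  induction β using Ordinal.induction_zero_add_one_limit with
  | zero =>
    have hcoe : ((⊤ : Subgroup G) : Set G) = Env H 0 := by rw [Env_zero, coe_top]
    exact ⟨⊤, hcoe, le_top,
      le_normalizer_CIter_of_coe_eq_Env hcoe le_top fun δ hδ => absurd hδ not_lt_zero⟩
  | add_one β IH =>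
    obtain ⟨Eβ, hEβ⟩ := IH β le_rfl
    have hM : Eβ ≤ normalizer (iterCentralizer Eβ H β : Set G) := by
      rw [coe_iterCentralizer]
      exact hEβ.le_normalizer β le_rfl
    let E := relCentralizer Eβ (iterCentralizer Eβ H β) hM (CIter Eβ H (β + 1))
    have hcoe : (E : Set G) = Env H (β + 1) := by
      ext x
      rw [SetLike.mem_coe, mem_relCentralizer, mem_Env_add_one, ← hEβ.coe_eq]
      simp only [SetLike.mem_coe, mem_iterCentralizer]
    have hle : H ≤ E := fun h hh => mem_relCentralizer.mpr ⟨hEβ.le hh, fun c hc => by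
      rw [← pcomm_inv]
      exact inv_mem (mem_iterCentralizer.mpr ((mem_CIter_add_one.mp hc).2.2 h hh))⟩
    exact ⟨E, hcoe, hle, le_normalizer_CIter_of_coe_eq_Env hcoe hle fun δ hδ =>
      IH δ (lt_add_one_iff.mp hδ)⟩
  | limit o ho IH =>
    choose E hE using IH
    have hcoe : ((⨅ δ, ⨅ hδ : δ < o, E δ hδ : Subgroup G) : Set G) = Env H o := by
      simp only [coe_iInf, Env_of_isSuccLimit _ ho, (hE _ _).coe_eq]
    have hle : H ≤ ⨅ δ, ⨅ hδ : δ < o, E δ hδ := le_iInf₂ fun δ hδ => (hE δ hδ).le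
    exact ⟨_, hcoe, hle, le_normalizer_CIter_of_coe_eq_Env hcoe hle fun δ hδ => ⟨_, hE δ hδ⟩⟩

lemma IsEnvelope.le_of_le {δ β : Ordinal.{u}} (h : δ ≤ β) {Eδ Eβ : Subgroup G}
    (hEδ : IsEnvelope H δ Eδ) (hEβ : IsEnvelope H β Eβ) : Eβ ≤ Eδ := by
  rw [← SetLike.coe_subset_coe, hEβ.coe_eq, hEδ.coe_eq]
  exact Env_antitone _ h

lemma IsEnvelope.le_iterCentralizer_add_one {α : Ordinal} {E K : Subgroup G}
    (hE : IsEnvelope H α E) (hK : IsEnvelope H (α + 1) K) (hH : (H : Set G) ⊆ CIter E H (α + 1)) :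
    K ≤ iterCentralizer E H (α + 1) := by
  intro g hg
  have hgE : g ∈ E := hE.le_of_le (lt_add_one α).le hK hg
  have hgEnv := hK.coe_eq.subset hg
  rw [mem_Env_add_one, ← hE.coe_eq] at hgEnv
  exact mem_iterCentralizer.mpr (mem_CIter_add_one.mpr
    ⟨hgE, fun γ hγ => hE.le_normalizer γ hγ hgE, fun h hh => hgEnv.2 h (hH hh)⟩)

lemma IsEnvelope.commutator_iterCentralizer_le {δ α : Ordinal.{u}} (hδα : δ ≤ α) {E K : Subgroup G}
    (hE : IsEnvelope H α E) (hK : IsEnvelope H (α + 1) K) :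
    ⁅K, iterCentralizer E H (δ + 1)⁆ ≤ iterCentralizer E H δ := by
  obtain ⟨Eδ, hEδ⟩ := exists_isEnvelope H δ
  refine Subgroup.commutator_le.mpr fun g hg c hc => ?_
  have hg' : g⁻¹ ∈ Env H (δ + 1) :=
    Env_antitone _ (add_le_add_left hδα 1) (hK.coe_eq.subset (inv_mem hg))
  rw [commutatorElement_eq_pcomm, mem_iterCentralizer]
  exact pcomm_mem_CIter_of_mem_Env hδα hEδ hE.coe_eq hE.le hg'
    (hE.le_of_le (lt_add_one α).le hK (inv_mem hg)) (mem_iterCentralizer.mp (inv_mem hc))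

end Envelope

section Solvable

variable {G : Type*} [Group G]

/-- Otherwise every member of the family has a strictly smaller centralizer further along,
and iterating this choice gives an infinite descending chain of centralizers. -/
lemma exists_centralizer_iUnion_eq
    (hMC : ¬ ∃ A : ℕ → Set G, ∀ n, Set.centralizer (A (n + 1)) ⊂ Set.centralizer (A n))
    {ι : Type*} [Nonempty ι] {C : ι → Set G} (hC : Directed (· ⊆ ·) C) :
    ∃ i, Set.centralizer (⋃ j, C j) = Set.centralizer (C i) := by
  by_contra! h
  have hdrop : ∀ i, ∃ k, Set.centralizer (C k) ⊂ Set.centralizer (C i) := by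
    intro i
    have hsub := Set.centralizer_subset (Set.subset_iUnion C i)
    obtain ⟨g, hgi, hg⟩ := Set.exists_of_ssubset (hsub.ssubset_of_ne (h i))
    simp only [Set.mem_centralizer_iff, Set.mem_iUnion, not_forall] at hg
    obtain ⟨c, ⟨j, hcj⟩, hgc⟩ := hg
    obtain ⟨k, hik, hjk⟩ := hC i j
    refine ⟨k, (Set.ssubset_iff_of_subset (Set.centralizer_subset hik)).mpr ⟨g, hgi, ?_⟩⟩
    exact fun hgk => hgc (hgk c (hjk hcj))
  choose f hf using hdrop
  exact hMC ⟨fun n => C (f^[n] (Classical.arbitrary ι)), fun n => by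
    simpa only [Function.iterate_succ_apply'] using hf _⟩

/-- By the three subgroups lemma. -/
lemma commutator_le_centralizer {A B S : Subgroup G} (hAB : ⁅A, B⁆ ≤ S)
    (hAS : A ≤ centralizer S) : ⁅A, A⁆ ≤ centralizer B := by
  have hSA : ⁅S, A⁆ = ⊥ := by
    rw [commutator_comm, commutator_eq_bot_iff_le_centralizer]
    exact hAS
  rw [← commutator_eq_bot_iff_le_centralizer]
  apply commutator_commutator_eq_bot_of_rotate
  · exact eq_bot_iff.mpr ((commutator_mono hAB le_rfl).trans hSA.le)
  · rw [commutator_comm B]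
    exact eq_bot_iff.mpr ((commutator_mono hAB le_rfl).trans hSA.le)

theorem isSolvable_of_stabilizes_series
    (hMC : ¬ ∃ A : ℕ → Set G, ∀ n, Set.centralizer (A (n + 1)) ⊂ Set.centralizer (A n))
    {C : Ordinal.{u} → Subgroup G} (hC : Monotone C) (hC0 : C 0 = ⊥)
    (hClim : ∀ o, IsSuccLimit o → (C o : Set G) = ⋃ β < o, (C β : Set G))
    {γ₀ : Ordinal.{u}} {K : Subgroup G} (hK : K ≤ C γ₀)
    (hKC : ∀ δ, δ + 1 ≤ γ₀ → ⁅K, C (δ + 1)⁆ ≤ C δ) : Group.IsSolvable K := by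
  set D : ℕ → Subgroup G := fun n => (derivedSeries K n).map K.subtype
  have hDK : ∀ n, D n ≤ K := fun n => map_subtype_le _
  have hDsucc : ∀ n, D (n + 1) = ⁅D n, D n⁆ := fun n => by
    simp only [D, derivedSeries_succ, map_commutator]
  have key : ∀ γ ≤ γ₀, ∃ n, D n ≤ centralizer (C γ) := by
    intro γ
    induction γ using Ordinal.induction_zero_add_one_limit with
    | zero =>
      refine fun _ => ⟨0, fun x _ => mem_centralizer_iff.mpr fun h hh => ?_⟩
      rw [hC0, coe_bot, Set.mem_singleton_iff] at hh
      rw [hh, one_mul, mul_one]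
    | add_one δ IH =>
      intro hδ
      obtain ⟨n, hn⟩ := IH δ le_rfl ((lt_add_one δ).le.trans hδ)
      exact ⟨n + 1, hDsucc n ▸
        commutator_le_centralizer ((commutator_mono (hDK n) le_rfl).trans (hKC δ hδ)) hn⟩
    | limit o ho IH =>
      intro ho₀
      have : Nonempty (Set.Iio o) := ⟨⟨0, ho.bot_lt⟩⟩
      obtain ⟨⟨β, hβ⟩, hβc⟩ := exists_centralizer_iUnion_eq hMC
        (C := fun β : Set.Iio o => (C β : Set G)) (Monotone.directed_le fun β γ h => hC h)
      obtain ⟨n, hn⟩ := IH β hβ (hβ.le.trans ho₀)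
      refine ⟨n, hn.trans_eq (SetLike.coe_injective ?_)⟩
      change Set.centralizer _ = Set.centralizer _
      rw [hClim o ho, ← hβc, Set.iUnion_subtype]
      rfl
  obtain ⟨n, hn⟩ := key γ₀ le_rfl
  refine ⟨⟨n + 1, (map_eq_bot_iff_of_injective _ K.subtype_injective).mp ?_⟩⟩
  change D (n + 1) = ⊥
  rw [hDsucc, eq_bot_iff]
  refine (commutator_mono le_rfl (hDK n)).trans (commutator_eq_bot_iff_le_centralizer.mpr ?_).le
  exact hn.trans (centralizer_le (SetLike.coe_subset_coe.mpr hK))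

end Solvable

theorem stmt15 {G : Type*} [Group G]
    (hMC : ¬ ∃ A : ℕ → Set G, ∀ n, Set.centralizer (A (n + 1)) ⊂ Set.centralizer (A n))
    (H : Subgroup G) (α : Ordinal) (hH : ZSet (H : Set G) α = (H : Set G)) :
    ∃ K : Subgroup G, (K : Set G) = Env (H : Set G) (α + 1) ∧ IsSolvable K := by
  obtain ⟨E, hE⟩ := exists_isEnvelope H α
  obtain ⟨K, hK⟩ := exists_isEnvelope H (α + 1)
  have hHC : (H : Set G) ⊆ CIter E H (α + 1) := fun h hh =>
    CIter_mono E H (lt_add_one α).le (ZSet_subset_CIter hE.le α (hH.symm.subset hh))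
  refine ⟨K, hK.coe_eq, isSolvable_of_stabilizes_series hMC (iterCentralizer_mono E H)
    (iterCentralizer_zero E H) (fun o ho => coe_iterCentralizer_of_isSuccLimit E H ho)
    (hE.le_iterCentralizer_add_one hK hHC) fun δ hδ => ?_⟩
  exact hE.commutator_iterCentralizer_le (lt_add_one_iff.mp (add_one_le_iff.mp hδ)) hK
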